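/- With notation as follows: k ≥ 1, positive integers p_1, ..., p_k, integers a_1, ..., a_k, ℓ_j = a_j + p_{j+1} + ... + p_k, and ℓ_k = a_k. Suppose an integer-valued function c on ∏_j {0, 1, ..., p_j} satisfies the Type 1, Type 2 and Type 3 linear constraints: c(i', 0) + a_k c(i', p_k) = 0; c(..., i_j, ...) + c(..., i_j+1, ...) = 0 for 1 ≤ i_j ≤ p_j − 1; and c(..., 0, p_{j+1}, ...) − c(..., p_j, 0, ...) + (a_j − a_{j+1} + p_{j+1}) c(..., p_j, p_{j+1}, ...) = 0 for 1 ≤ j ≤ k−1. Then c is determined by its value at (p_1, ..., p_k); more precisely, c = c(p_1,...,p_k) · b, where b is the function with b(i) = ∏_j c_j(i_j), c_j(0) = −ℓ_j, c_j(m) = (−1)^(p_j − m) for m ≥ 1. -/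

import Mathlib

theorem stmt_8 (k : ℕ) (hk : 1 ≤ k) (p : Fin k → ℕ) (hp : ∀ j, 1 ≤ p j)
    (a : Fin k → ℤ) (ℓ : Fin k → ℤ)
    (hℓ : ∀ j, ℓ j = a j + ∑ t ∈ Finset.univ.filter (fun t => j < t), (p t : ℤ))
    (c : ((j : Fin k) → Fin (p j + 1)) → ℤ)
    (jl : Fin k) (hjl : (jl : ℕ) = k - 1)
    -- Type 1 constraints
    (h1 : ∀ i : (j : Fin k) → Fin (p j + 1),
        c (Function.update i jl 0) + a jl * c (Function.update i jl (Fin.last (p jl))) = 0)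
    -- Type 2 constraints
    (h2 : ∀ (j : Fin k) (m : ℕ) (hm1 : 1 ≤ m) (hm2 : m + 1 ≤ p j)
        (i : (j : Fin k) → Fin (p j + 1)),
        c (Function.update i j ⟨m, by omega⟩) + c (Function.update i j ⟨m + 1, by omega⟩) = 0)
    -- Type 3 constraints
    (h3 : ∀ (j j' : Fin k), (j : ℕ) + 1 = (j' : ℕ) →
        ∀ i : (j : Fin k) → Fin (p j + 1),
        c (Function.update (Function.update i j 0) j' (Fin.last (p j'))) -
          c (Function.update (Function.update i j (Fin.last (p j))) j' 0) +
          (a j - a j' + (p j' : ℤ)) *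
            c (Function.update (Function.update i j (Fin.last (p j))) j' (Fin.last (p j'))) = 0) :
    ∀ i : (j : Fin k) → Fin (p j + 1),
      c i = c (fun j => Fin.last (p j)) *
        ∏ j, (if (i j : ℕ) = 0 then -ℓ j else (-1 : ℤ) ^ (p j - (i j : ℕ))) := by
  -- Claim A : reduce interior values to p j
  have hA : ∀ (j : Fin k) (d : ℕ), ∀ (m : ℕ), ∀ _ : 1 ≤ m, ∀ hme : m + d = p j,
      ∀ i : (j : Fin k) → Fin (p j + 1),
      c (Function.update i j ⟨m, by omega⟩) =
        (-1 : ℤ) ^ d * c (Function.update i j (Fin.last (p j))) := by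
    intro j d
    induction d with
    | zero =>
      intro m hm1 hme i
      have hv : (⟨m, by omega⟩ : Fin (p j + 1)) = Fin.last (p j) := by
        ext; simp [Fin.last]; omega
      rw [hv]; ring
    | succ d ih =>
      intro m hm1 hme i
      have h := h2 j m hm1 (by omega) i
      have h' := ih (m + 1) (by omega) (by omega) i
      have e : (⟨m + 1, by omega⟩ : Fin (p j + 1)) = ⟨m + 1, by omega⟩ := rfl
      rw [pow_succ]
      linarith [h, h']
  -- Claim B : reduce a 0 coordinate, provided all later coordinates are at p
  have hB : ∀ (n : ℕ) (j : Fin k), k - 1 - (j : ℕ) ≤ n →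
      ∀ i : (j : Fin k) → Fin (p j + 1), (∀ t, j < t → i t = Fin.last (p t)) →
      c (Function.update i j 0) = -ℓ j * c (Function.update i j (Fin.last (p j))) := by
    -- first the case j = k - 1
    have hlast : ∀ i : (j : Fin k) → Fin (p j + 1),
        c (Function.update i jl 0) = -ℓ jl * c (Function.update i jl (Fin.last (p jl))) := by
      intro i
      have h := h1 i
      have hsum : Finset.univ.filter (fun t => jl < t) = (∅ : Finset (Fin k)) := by
        ext t
        simp only [Finset.mem_filter, Finset.mem_univ, true_and, Finset.notMem_empty,
          iff_false, Fin.lt_def, hjl]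
        have := t.isLt
        omega
      have hl : ℓ jl = a jl := by rw [hℓ jl, hsum]; simp
      rw [hl]; linarith
    intro n
    induction n with
    | zero =>
      intro j hj i hi
      have hjeq : j = jl := by
        apply Fin.ext
        have := j.isLt
        omega
      rw [hjeq]; exact hlast i
    | succ n ih =>
      intro j hj i hi
      by_cases hjk : (j : ℕ) = k - 1
      · have hjeq : j = jl := by apply Fin.ext; omega
        rw [hjeq]; exact hlast i
      · have hjk' : (j : ℕ) + 1 < k := by have := j.isLt; omega
        set j' : Fin k := ⟨(j : ℕ) + 1, hjk'⟩ with hj'def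
        have hj'val : (j' : ℕ) = (j : ℕ) + 1 := rfl
        have hjj' : j ≠ j' := by
          intro h; apply congrArg Fin.val at h; omega
        have hij' : i j' = Fin.last (p j') := hi j' (by rw [Fin.lt_def]; omega)
        set i1 := Function.update i j (Fin.last (p j)) with hi1def
        have key := h3 j j' rfl i
        rw [← hi1def] at key
        have e1 : Function.update (Function.update i j 0) j' (Fin.last (p j'))
            = Function.update i j 0 := by
          have : Function.update i j 0 j' = Fin.last (p j') := by
            rw [Function.update_of_ne (Ne.symm hjj')]; exact hij'
          rw [← this, Function.update_eq_self]
        have e2 : Function.update i1 j' (Fin.last (p j')) = i1 := by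
          have : i1 j' = Fin.last (p j') := by
            rw [hi1def, Function.update_of_ne (Ne.symm hjj')]; exact hij'
          rw [← this, Function.update_eq_self]
        rw [e1, e2] at key
        -- apply induction hypothesis at j'
        have hrec := ih j' (by omega) i1 (by
          intro t ht
          rw [Fin.lt_def] at ht
          have htj : t ≠ j := by
            intro h; rw [h] at ht; omega
          rw [hi1def, Function.update_of_ne htj]
          exact hi t (by rw [Fin.lt_def]; omega))
        rw [e2] at hrec
        -- the ℓ recursion
        have hsum : Finset.univ.filter (fun t => j < t)
            = insert j' (Finset.univ.filter (fun t => j' < t)) := by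
          ext t
          simp only [Finset.mem_filter, Finset.mem_univ, true_and, Finset.mem_insert,
            Fin.lt_def, Fin.ext_iff, hj'val]
          omega
        have hnotmem : j' ∉ Finset.univ.filter (fun t => j' < t) := by
          simp
        have hlrec : ℓ j = a j + (p j' : ℤ) + (ℓ j' - a j') := by
          rw [hℓ j, hℓ j', hsum, Finset.sum_insert hnotmem]; ring
        -- combine
        linear_combination key + hrec + c i1 * hlrec
  -- Main induction
  have hP : ∀ (n : ℕ) (i : (j : Fin k) → Fin (p j + 1)),
      (∀ t : Fin k, n ≤ (t : ℕ) → i t = Fin.last (p t)) →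
      c i = c (fun j => Fin.last (p j)) *
        ∏ j, (if (i j : ℕ) = 0 then -ℓ j else (-1 : ℤ) ^ (p j - (i j : ℕ))) := by
    intro n
    induction n with
    | zero =>
      intro i hi
      have hieq : i = fun j => Fin.last (p j) := funext fun j => hi j (Nat.zero_le _)
      subst hieq
      have hprod : (∏ j, (if ((Fin.last (p j) : ℕ)) = 0 then -ℓ j
          else (-1 : ℤ) ^ (p j - ((Fin.last (p j)) : ℕ)))) = 1 := by
        apply Finset.prod_eq_one
        intro j _
        have hpj := hp j
        rw [if_neg (by simp [Fin.last]; omega)]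
        simp [Fin.last]
      rw [hprod]; ring
    | succ n ih =>
      intro i hi
      by_cases hn : n < k
      · obtain ⟨jn, hjnval⟩ : ∃ jn : Fin k, (jn : ℕ) = n := ⟨⟨n, hn⟩, rfl⟩
        set i' := Function.update i jn (Fin.last (p jn)) with hi'def
        have hi' : ∀ t : Fin k, n ≤ (t : ℕ) → i' t = Fin.last (p t) := by
          intro t ht
          by_cases htn : t = jn
          · rw [htn, hi'def, Function.update_self]
          · rw [hi'def, Function.update_of_ne htn]
            apply hi t
            have : (t : ℕ) ≠ n := by
              intro h; apply htn; apply Fin.ext; omega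
            omega
        have hci' := ih i' hi'
        -- factor out the jn term from both products
        have hsplit : ∀ f : Fin k → ℤ, ∏ j, f j = f jn * ∏ j ∈ Finset.univ.erase jn, f j :=
          fun f => (Finset.mul_prod_erase Finset.univ f (Finset.mem_univ jn)).symm
        have herase : (∏ j ∈ Finset.univ.erase jn,
              (if (i j : ℕ) = 0 then -ℓ j else (-1 : ℤ) ^ (p j - (i j : ℕ))))
            = ∏ j ∈ Finset.univ.erase jn,
              (if (i' j : ℕ) = 0 then -ℓ j else (-1 : ℤ) ^ (p j - (i' j : ℕ))) := by
          apply Finset.prod_congr rfl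
          intro j hj
          rw [hi'def, Function.update_of_ne (Finset.ne_of_mem_erase hj)]
        have hfact' : (if (i' jn : ℕ) = 0 then -ℓ jn else (-1 : ℤ) ^ (p jn - (i' jn : ℕ))) = 1 := by
          rw [hi'def, Function.update_self]
          have hpjn := hp jn
          rw [if_neg (by simp [Fin.last]; omega)]
          simp [Fin.last]
        by_cases hm : (i jn : ℕ) = 0
        · -- zero case : use claim B
          have hizero : i jn = 0 := Fin.ext (by simpa using hm)
          have hiupd : Function.update i jn 0 = i := by
            rw [← hizero, Function.update_eq_self]
          have hBapp := hB k jn ((Nat.sub_le _ _).trans (Nat.sub_le _ _)) i (by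
            intro t ht
            apply hi t
            rw [Fin.lt_def] at ht
            omega)
          rw [hiupd] at hBapp
          rw [hBapp, ← hi'def, hci']
          rw [hsplit (fun j => (if (i j : ℕ) = 0 then -ℓ j else (-1 : ℤ) ^ (p j - (i j : ℕ)))),
            hsplit (fun j => (if (i' j : ℕ) = 0 then -ℓ j else (-1 : ℤ) ^ (p j - (i' j : ℕ))))]
          simp only [herase, hfact', if_pos hm]
          ring
        · -- positive case : use claim A
          have hm1 : 1 ≤ (i jn : ℕ) := by omega
          have hmle : (i jn : ℕ) ≤ p jn := by have := (i jn).isLt; omega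
          have hAapp := hA jn (p jn - (i jn : ℕ)) (i jn : ℕ) hm1 (by omega) i
          have hiupd : Function.update i jn ⟨(i jn : ℕ), by omega⟩ = i := by
            have : (⟨(i jn : ℕ), by omega⟩ : Fin (p jn + 1)) = i jn := Fin.ext rfl
            rw [this, Function.update_eq_self]
          rw [hiupd] at hAapp
          rw [hAapp, ← hi'def, hci']
          rw [hsplit (fun j => (if (i j : ℕ) = 0 then -ℓ j else (-1 : ℤ) ^ (p j - (i j : ℕ)))),
            hsplit (fun j => (if (i' j : ℕ) = 0 then -ℓ j else (-1 : ℤ) ^ (p j - (i' j : ℕ))))]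
          simp only [herase, hfact', if_neg hm]
          ring
      · apply ih
        intro t ht
        exact absurd t.isLt (by omega)
  intro i
  exact hP k i (fun t ht => absurd t.isLt (by omega))
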